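/- arXiv:1307.1277 — 2 statements merged into one kernel-verified Lean document; each statement's English description precedes it below -/
import Mathlib

section
/- If an evidence model is flat, then its derived plausibility relation satisfies the boundedness condition: every directed set has an upper bound. -/
def FIP {W : Type*} (𝒳 : Set (Set W)) : Prop :=
  ∀ 𝒴 ⊆ 𝒳, 𝒴.Finite → (⋂₀ 𝒴).Nonempty

def UScenario {W : Type*} (ℰ : Set (Set W)) (𝒳 : Set (Set W)) : Prop :=
  𝒳 ⊆ ℰ ∧ FIP 𝒳 ∧ ∀ 𝒴, 𝒳 ⊆ 𝒴 → 𝒴 ⊆ ℰ → FIP 𝒴 → 𝒴 = 𝒳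

def USpecLE {W : Type*} (ℰ : Set (Set W)) (w v : W) : Prop :=
  ∀ X ∈ ℰ, w ∈ X → v ∈ X

/-!
The evidence sets containing some point of a directed set `D` have the finite intersection
property: finitely many of them contain points of `D`, and an upper bound of these points in `D`
lies in all of them. By Zorn's lemma (in its Teichmüller–Tukey form, FIP being of finite
character) this family extends to a scenario, and by flatness the scenario has a point in its
intersection, which is an upper bound of `D`.
-/

section

variable {W : Type*} (ℰ : Set (Set W))

def evidenceAt (w : W) : Set (Set W) := {X | X ∈ ℰ ∧ w ∈ X}

theorem uSpecLE_iff_evidenceAt_subset {w v : W} :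
    USpecLE ℰ w v ↔ evidenceAt ℰ w ⊆ evidenceAt ℰ v :=
  ⟨fun h X hX => ⟨hX.1, h X hX.1 hX.2⟩, fun h _ hX hw => (h ⟨hX, hw⟩).2⟩

theorem fip_biUnion_evidenceAt {D : Set W} (hD : D.Nonempty) (hdir : DirectedOn (USpecLE ℰ) D) :
    FIP (⋃ d ∈ D, evidenceAt ℰ d) := by
  intro 𝒴 h𝒴 hfin
  have hmono : DirectedOn (fun a b => evidenceAt ℰ a ⊆ evidenceAt ℰ b) D :=
    hdir.mono fun _ _ h => (uSpecLE_iff_evidenceAt_subset ℰ).mp h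
  obtain ⟨c, -, hc⟩ := hmono.exists_mem_subset_of_finset_subset_biUnion hD
    (s := hfin.toFinset) (by simpa using h𝒴)
  exact ⟨c, fun X hX => (hc (by simpa using hX)).2⟩

theorem isOfFiniteCharacter_fip :
    Order.IsOfFiniteCharacter {𝒳 : Set (Set W) | 𝒳 ⊆ ℰ ∧ FIP 𝒳} := by
  refine fun 𝒳 => ⟨fun h𝒳 𝒴 h𝒴 _ => ⟨h𝒴.trans h𝒳.1, fun 𝒵 h𝒵 => h𝒳.2 𝒵 (h𝒵.trans h𝒴)⟩,
    fun h => ⟨fun X hX => ?_, fun 𝒴 h𝒴 hfin => (h 𝒴 h𝒴 hfin).2 𝒴 subset_rfl hfin⟩⟩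
  exact (h {X} (Set.singleton_subset_iff.mpr hX) (Set.finite_singleton X)).1 rfl

theorem exists_uScenario_superset {𝒳 : Set (Set W)} (hℰ : 𝒳 ⊆ ℰ) (h𝒳 : FIP 𝒳) :
    ∃ 𝒴, 𝒳 ⊆ 𝒴 ∧ UScenario ℰ 𝒴 := by
  obtain ⟨𝒴, h𝒳𝒴, hmax⟩ := (isOfFiniteCharacter_fip ℰ).exists_maximal ⟨hℰ, h𝒳⟩
  exact ⟨𝒴, h𝒳𝒴, hmax.prop.1, hmax.prop.2,
    fun 𝒵 h𝒴𝒵 hℰ h𝒵 => (hmax.eq_of_subset ⟨hℰ, h𝒵⟩ h𝒴𝒵).symm⟩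

end

theorem stmt_7_general {W : Type*} [Nonempty W] (ℰ : Set (Set W))
    (hflat : ∀ 𝒳, UScenario ℰ 𝒳 → (⋂₀ 𝒳).Nonempty)
    (D : Set W)
    (hdir : ∀ a ∈ D, ∀ b ∈ D, ∃ c ∈ D, USpecLE ℰ a c ∧ USpecLE ℰ b c) :
    ∃ v : W, ∀ d ∈ D, USpecLE ℰ d v := by
  rcases D.eq_empty_or_nonempty with rfl | hD
  · exact ⟨Classical.arbitrary W, by simp⟩
  obtain ⟨𝒳, hD𝒳, hscen⟩ := exists_uScenario_superset ℰ
    (Set.iUnion₂_subset fun _ _ _ hX => hX.1) (fip_biUnion_evidenceAt ℰ hD hdir)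
  obtain ⟨v, hv⟩ := hflat 𝒳 hscen
  exact ⟨v, fun d hd X hX hdX => hv X (hD𝒳 (Set.mem_biUnion hd ⟨hX, hdX⟩))⟩

theorem stmt_7 {W : Type*} [Nonempty W] (ℰ : Set (Set W))
    (hne : ∅ ∉ ℰ) (huniv : Set.univ ∈ ℰ)
    (hflat : ∀ 𝒳, UScenario ℰ 𝒳 → (⋂₀ 𝒳).Nonempty)
    (D : Set W)
    (hdir : ∀ a ∈ D, ∀ b ∈ D, ∃ c ∈ D, USpecLE ℰ a c ∧ USpecLE ℰ b c) :
    ∃ v : W, ∀ d ∈ D, USpecLE ℰ d v :=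
  stmt_7_general ℰ hflat D hdir
end

section
/- Counterexample to conditional-belief disjunction: there is a uniform evidence model with four evidence sets and valuations of p, q such that [B]q holds (q is true at every point of the intersection of every scenario) but neither [B]^p q nor [B]^{¬p} q holds. Concretely, take W with points a,b,c,d,e,f, X₁={a,b}, Y₁={b,c}, X₂={d,e}, Y₂={e,f}, ℰ={X₁,Y₁,X₂,Y₂,W}, with p true exactly at {b,c,d}, q true exactly at {b,e}. Then every scenario intersection is contained in ⟦q⟧, but there is a p-scenario 𝒳 with ⋂𝒳^p ⊄ ⟦q⟧ and a ¬p-scenario 𝒴 with ⋂𝒴^{¬p} ⊄ ⟦q⟧. -/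
def relFam {W : Type*} (𝒳 : Set (Set W)) (X : Set W) : Set (Set W) :=
  (fun Y => Y ∩ X) '' 𝒳

def RelScenario {W : Type*} (ℰ : Set (Set W)) (X : Set W) (𝒳 : Set (Set W)) : Prop :=
  𝒳 ⊆ ℰ ∧ FIP (relFam 𝒳 X) ∧ ∀ 𝒴, 𝒳 ⊆ 𝒴 → 𝒴 ⊆ ℰ → FIP (relFam 𝒴 X) → 𝒴 = 𝒳

section General

variable {W : Type*} {ℰ 𝒳 𝒜 : Set (Set W)} {X : Set W}

theorem FIP.of_sInter_nonempty (h : (⋂₀ 𝒳).Nonempty) : FIP 𝒳 :=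
  fun _ h𝒴 _ => h.mono (Set.sInter_subset_sInter h𝒴)

theorem FIP.inter_nonempty (h : FIP 𝒳) {A B : Set W} (hA : A ∈ 𝒳) (hB : B ∈ 𝒳) :
    (A ∩ B).Nonempty := by
  simpa only [Set.sInter_pair] using
    h {A, B} (Set.insert_subset hA (Set.singleton_subset_iff.2 hB)) (Set.toFinite _)

theorem mem_relFam {A : Set W} (hA : A ∈ 𝒳) : A ∩ X ∈ relFam 𝒳 X :=
  Set.mem_image_of_mem _ hA

theorem sInter_inter_subset_sInter_relFam : ⋂₀ 𝒳 ∩ X ⊆ ⋂₀ relFam 𝒳 X := by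
  rintro w ⟨hw𝒳, hwX⟩ _ ⟨A, hA, rfl⟩
  exact ⟨hw𝒳 A hA, hwX⟩

theorem UScenario.subset_of_sInter_union_nonempty (h : UScenario ℰ 𝒳) (h𝒜 : 𝒜 ⊆ ℰ)
    (hne : (⋂₀ (𝒳 ∪ 𝒜)).Nonempty) : 𝒜 ⊆ 𝒳 := by
  rw [← h.2.2 (𝒳 ∪ 𝒜) Set.subset_union_left (Set.union_subset h.1 h𝒜)
    (FIP.of_sInter_nonempty hne)]
  exact Set.subset_union_right

-- By maximality the scenario contains the whole block `𝒜`.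
theorem UScenario.sInter_subset_of_subset_insert_univ (h : UScenario ℰ 𝒳) (h𝒜 : 𝒜 ⊆ ℰ)
    {w : W} (hw : w ∈ ⋂₀ 𝒜) (h𝒳 : 𝒳 ⊆ insert Set.univ 𝒜) : ⋂₀ 𝒳 ⊆ ⋂₀ 𝒜 := by
  refine Set.sInter_subset_sInter (h.subset_of_sInter_union_nonempty h𝒜 ⟨w, ?_⟩)
  rintro A (hA | hA)
  · rcases h𝒳 hA with rfl | hA
    exacts [Set.mem_univ w, hw A hA]
  · exact hw A hA

theorem relScenario_of_forall_inter_eq_empty (h𝒳 : 𝒳 ⊆ ℰ) (hne : (⋂₀ 𝒳 ∩ X).Nonempty)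
    (hblock : ∀ S ∈ ℰ \ 𝒳, ∃ T ∈ 𝒳, S ∩ T ∩ X = ∅) : RelScenario ℰ X 𝒳 := by
  refine ⟨h𝒳, FIP.of_sInter_nonempty (hne.mono sInter_inter_subset_sInter_relFam), ?_⟩
  intro 𝒴 h𝒳𝒴 h𝒴 hfip
  refine Set.Subset.antisymm (fun S hS => ?_) h𝒳𝒴
  by_contra hS𝒳
  obtain ⟨T, hT, hST⟩ := hblock S ⟨h𝒴 hS, hS𝒳⟩
  have := hfip.inter_nonempty (mem_relFam hS) (mem_relFam (X := X) (h𝒳𝒴 hT))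
  rw [← Set.inter_inter_distrib_right, hST] at this
  exact Set.not_nonempty_empty this

end General

namespace DisjunctionCounterexample

def X₁ : Set (Fin 6) := {0, 1}
def Y₁ : Set (Fin 6) := {1, 2}
def X₂ : Set (Fin 6) := {3, 4}
def Y₂ : Set (Fin 6) := {4, 5}
def ℰ : Set (Set (Fin 6)) := {X₁, Y₁, X₂, Y₂, Set.univ}
def p : Set (Fin 6) := {1, 2, 3}
def q : Set (Fin 6) := {1, 4}

theorem subset_insert_univ_of_fip {𝒳 : Set (Set (Fin 6))} (h𝒳 : 𝒳 ⊆ ℰ) (hfip : FIP 𝒳) :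
    𝒳 ⊆ insert Set.univ {X₁, Y₁} ∨ 𝒳 ⊆ insert Set.univ {X₂, Y₂} := by
  by_contra! ⟨h₁, h₂⟩
  obtain ⟨S, hS, hS₁⟩ := Set.not_subset.1 h₁
  obtain ⟨T, hT, hT₂⟩ := Set.not_subset.1 h₂
  obtain ⟨x, hxS, hxT⟩ := hfip.inter_nonempty hS hT
  rcases h𝒳 hS with rfl | rfl | rfl | rfl | rfl <;> simp at hS₁ <;>
  rcases h𝒳 hT with rfl | rfl | rfl | rfl | rfl <;> simp at hT₂ <;>
  fin_cases x <;> simp_all [X₁, Y₁, X₂, Y₂]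

theorem sInter_subset_q {𝒳 : Set (Set (Fin 6))} (h𝒳 : UScenario ℰ 𝒳) : ⋂₀ 𝒳 ⊆ q := by
  have hq₁ : X₁ ∩ Y₁ ⊆ q := by intro x; fin_cases x <;> simp [X₁, Y₁, q]
  have hq₂ : X₂ ∩ Y₂ ⊆ q := by intro x; fin_cases x <;> simp [X₂, Y₂, q]
  rcases subset_insert_univ_of_fip h𝒳.1 h𝒳.2.1 with h | h
  · have := h𝒳.sInter_subset_of_subset_insert_univ (w := 1) (by simp [ℰ, Set.insert_subset_iff])
      (by simp [X₁, Y₁]) h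
    exact (Set.sInter_pair X₁ Y₁ ▸ this).trans hq₁
  · have := h𝒳.sInter_subset_of_subset_insert_univ (w := 4) (by simp [ℰ, Set.insert_subset_iff])
      (by simp [X₂, Y₂]) h
    exact (Set.sInter_pair X₂ Y₂ ▸ this).trans hq₂

theorem exists_relScenario_p : ∃ 𝒳, RelScenario ℰ p 𝒳 ∧ ¬ ⋂₀ relFam 𝒳 p ⊆ q := by
  have h3 : (3 : Fin 6) ∈ ⋂₀ {X₂, Set.univ} ∩ p := by simp [X₂, p]
  refine ⟨{X₂, Set.univ}, relScenario_of_forall_inter_eq_empty (by simp [ℰ, Set.insert_subset_iff])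
    ⟨3, h3⟩ ?_, fun h => by simpa [q] using h (sInter_inter_subset_sInter_relFam h3)⟩
  rintro S ⟨hS | hS | hS | hS | hS, hS𝒳⟩ <;> subst hS
  · exact ⟨X₂, by simp, by ext x; fin_cases x <;> simp [X₁, X₂, p]⟩
  · exact ⟨X₂, by simp, by ext x; fin_cases x <;> simp [Y₁, X₂, p]⟩
  · simp at hS𝒳
  · exact ⟨Set.univ, by simp, by ext x; fin_cases x <;> simp [Y₂, p]⟩
  · simp at hS𝒳

theorem exists_relScenario_compl_p : ∃ 𝒴, RelScenario ℰ pᶜ 𝒴 ∧ ¬ ⋂₀ relFam 𝒴 pᶜ ⊆ q := by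
  have h0 : (0 : Fin 6) ∈ ⋂₀ {X₁, Set.univ} ∩ pᶜ := by simp [X₁, p]
  refine ⟨{X₁, Set.univ}, relScenario_of_forall_inter_eq_empty (by simp [ℰ, Set.insert_subset_iff])
    ⟨0, h0⟩ ?_, fun h => by simpa [q] using h (sInter_inter_subset_sInter_relFam h0)⟩
  rintro S ⟨hS | hS | hS | hS | hS, hS𝒳⟩ <;> subst hS
  · simp at hS𝒳
  · exact ⟨Set.univ, by simp, by ext x; fin_cases x <;> simp [Y₁, p]⟩
  · exact ⟨X₁, by simp, by ext x; fin_cases x <;> simp [X₁, X₂, p]⟩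
  · exact ⟨X₁, by simp, by ext x; fin_cases x <;> simp [X₁, Y₂, p]⟩
  · simp at hS𝒳

end DisjunctionCounterexample

theorem stmt_14 :
    let X₁ : Set (Fin 6) := {0, 1}
    let Y₁ : Set (Fin 6) := {1, 2}
    let X₂ : Set (Fin 6) := {3, 4}
    let Y₂ : Set (Fin 6) := {4, 5}
    let ℰ : Set (Set (Fin 6)) := {X₁, Y₁, X₂, Y₂, Set.univ}
    let p : Set (Fin 6) := {1, 2, 3}
    let q : Set (Fin 6) := {1, 4}
    (∀ 𝒳, UScenario ℰ 𝒳 → ⋂₀ 𝒳 ⊆ q) ∧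
    (∃ 𝒳, RelScenario ℰ p 𝒳 ∧ ¬ (⋂₀ relFam 𝒳 p ⊆ q)) ∧
    (∃ 𝒴, RelScenario ℰ pᶜ 𝒴 ∧ ¬ (⋂₀ relFam 𝒴 pᶜ ⊆ q)) := by
  open DisjunctionCounterexample in
  exact ⟨fun _ => sInter_subset_q, exists_relScenario_p, exists_relScenario_compl_p⟩
end
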